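/- Let z be a move such that both z⁺ and z⁻ are indispensable monomials. Then every 1-norm reducing set of moves B contains z or −z. -/

import Mathlib

open scoped BigOperators

section Defs

variable {ι κ : Type*} [Fintype ι]

/-- Embed a frequency vector `x ∈ ℕ^ι` into `ℤ^ι`. -/
def natToInt (x : ι → ℕ) : ι → ℤ := fun i => (x i : ℤ)

/-- The fiber of `t`: all frequency vectors `x` with `A x = t`. -/
def fiberOf (A : Matrix κ ι ℤ) (t : κ → ℤ) : Set (ι → ℕ) :=
  {x | A.mulVec (natToInt x) = t}

/-- A move for `A`: an integer vector in the kernel of `A`. -/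
def IsMove (A : Matrix κ ι ℤ) (z : ι → ℤ) : Prop := A.mulVec z = 0

/-- The positive part `z⁺` of an integer vector, as a frequency vector. -/
def posOf (z : ι → ℤ) : ι → ℕ := fun i => (z i).toNat

/-- The negative part `z⁻` of an integer vector, as a frequency vector. -/
def negOf (z : ι → ℤ) : ι → ℕ := fun i => (-z i).toNat

/-- The degree of a move: `deg z = |z⁺|`. -/
def degOf (z : ι → ℤ) : ℕ := ∑ i, posOf z i

/-- One step: add or subtract one move of `B`, staying in `ℕ^ι`. -/
def MStep (B : Set (ι → ℤ)) (x y : ι → ℕ) : Prop :=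
  ∃ z ∈ B, natToInt y = natToInt x + z ∨ natToInt y = natToInt x - z

/-- `y` is accessible from `x` by the moves of `B` (staying nonnegative throughout,
since all intermediate points are frequency vectors). -/
def Accessible (B : Set (ι → ℤ)) : (ι → ℕ) → (ι → ℕ) → Prop :=
  Relation.ReflTransGen (MStep B)

/-- A Markov basis: a finite set of moves such that every fiber forms a single
equivalence class for mutual accessibility. -/
def IsMarkovBasis (A : Matrix κ ι ℤ) (B : Set (ι → ℤ)) : Prop :=
  B.Finite ∧ (∀ z ∈ B, IsMove A z) ∧
    ∀ t : κ → ℤ, ∀ x ∈ fiberOf A t, ∀ y ∈ fiberOf A t, Accessible B x y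

/-- A minimal Markov basis: no proper subset is a Markov basis. -/
def IsMinimalMarkovBasis (A : Matrix κ ι ℤ) (B : Set (ι → ℤ)) : Prop :=
  IsMarkovBasis A B ∧ ∀ B' ⊂ B, ¬ IsMarkovBasis A B'

/-- An indispensable monomial: every Markov basis contains a move whose
positive or negative part is `x`. -/
def IsIndispensableMonomial (A : Matrix κ ι ℤ) (x : ι → ℕ) : Prop :=
  ∀ B : Set (ι → ℤ), IsMarkovBasis A B → ∃ z ∈ B, posOf z = x ∨ negOf z = x

/-- `B_n`: the set of moves of degree at most `n`. -/
def Bmoves (A : Matrix κ ι ℤ) (n : ℕ) : Set (ι → ℤ) :=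
  {z | IsMove A z ∧ degOf z ≤ n}

/-- The sample size `|t|` of a sufficient statistic `t` (well defined on nonempty
fibers under homogeneity). -/
noncomputable def sampleSize (A : Matrix κ ι ℤ) (t : κ → ℤ) : ℕ :=
  sInf {n | ∃ x ∈ fiberOf A t, ∑ i, x i = n}

/-- The `B_{|t|-1}`-equivalence classes of the fiber of `t`. -/
noncomputable def fiberClasses (A : Matrix κ ι ℤ) (t : κ → ℤ) : Set (Set (ι → ℕ)) :=
  {C | ∃ x ∈ fiberOf A t,
    C = {y | y ∈ fiberOf A t ∧ Accessible (Bmoves A (sampleSize A t - 1)) x y}}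

/-- Homogeneity: some rational vector `w` has `w ⬝ aᵢ = 1` for every column `aᵢ`. -/
def IsHomogeneousMatrix [Fintype κ] (A : Matrix κ ι ℤ) : Prop :=
  ∃ w : κ → ℚ, ∀ i : ι, ∑ j, w j * (A j i : ℚ) = 1

end Defs

/-- A set of moves `B` is 1-norm reducing: for distinct `x, y` in a common fiber, some
`z ∈ B` applied with sign `ε` to `x` or to `y` strictly decreases the ℓ¹ distance. -/
def IsNormReducing {ι κ : Type*} [Fintype ι] (A : Matrix κ ι ℤ) (B : Set (ι → ℤ)) :
    Prop :=
  ∀ t : κ → ℤ, ∀ x ∈ fiberOf A t, ∀ y ∈ fiberOf A t, x ≠ y →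
    ∃ z ∈ B, ∃ ε : ℤ, (ε = 1 ∨ ε = -1) ∧
      (((∀ i, 0 ≤ natToInt x i + ε * z i) ∧
          ∑ i, |natToInt x i + ε * z i - natToInt y i| <
            ∑ i, |natToInt x i - natToInt y i|) ∨
        ((∀ i, 0 ≤ natToInt y i + ε * z i) ∧
          ∑ i, |natToInt x i - (natToInt y i + ε * z i)| <
            ∑ i, |natToInt x i - natToInt y i|))

/-!
A 1-norm reducing set `B` is a Markov basis: repeatedly moving `x` or `y` closer in `ℓ¹`
connects them. If `x` is indispensable, no nonzero move `m` with `x + m ≥ 0` has degree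
below `|x|`; otherwise every move of a Markov basis with `x` as a part could be rerouted
through `x + m`, producing a Markov basis without such a move.

Now apply norm reduction to `z⁺` and `z⁻`: some `c = ±b`, `b ∈ B`, has (say) `z⁺ + c ≥ 0` and
`|z + c|₁ < |z|₁`. By homogeneity `|w|₁ = 2 deg w` for moves, so `z + c` is a move from `z⁻`
(since `z⁻ + (z + c) = z⁺ + c`) of degree below `|z⁻|`; indispensability of `z⁻` forces
`z + c = 0`.
-/

open scoped Pointwise Matrix

section Moves

variable {ι κ : Type*}

@[simp]
lemma natToInt_apply (x : ι → ℕ) (i : ι) : natToInt x i = x i := rfl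

lemma natToInt_posOf_of_nonneg {w : ι → ℤ} (hw : ∀ i, 0 ≤ w i) : natToInt (posOf w) = w :=
  funext fun i => Int.toNat_of_nonneg (hw i)

lemma posOf_sub_negOf_apply (z : ι → ℤ) (i : ι) : (posOf z i : ℤ) - negOf z i = z i := by
  simp only [posOf, negOf]
  omega

lemma natToInt_posOf_sub_natToInt_negOf (z : ι → ℤ) :
    natToInt (posOf z) - natToInt (negOf z) = z :=
  funext (posOf_sub_negOf_apply z)

lemma abs_eq_posOf_add_negOf (z : ι → ℤ) (i : ι) : |z i| = posOf z i + negOf z i := by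
  simp only [posOf, negOf]
  rcases le_total 0 (z i) with h | h
  · rw [abs_of_nonneg h]; omega
  · rw [abs_of_nonpos h]; omega

@[simp]
lemma posOf_zero : posOf (0 : ι → ℤ) = 0 := rfl

lemma posOf_neg (z : ι → ℤ) : posOf (-z) = negOf z := rfl

lemma negOf_neg (z : ι → ℤ) : negOf (-z) = posOf z := by
  funext i
  simp [posOf, negOf]

lemma IsMove.add [Fintype ι] {A : Matrix κ ι ℤ} {z w : ι → ℤ} (hz : IsMove A z)
    (hw : IsMove A w) : IsMove A (z + w) := by
  rw [IsMove, Matrix.mulVec_add, hz, hw, add_zero]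

lemma IsMove.neg [Fintype ι] {A : Matrix κ ι ℤ} {z : ι → ℤ} (hz : IsMove A z) :
    IsMove A (-z) := by
  rw [IsMove, Matrix.mulVec_neg, hz, neg_zero]

lemma IsMove.mulVec_posOf_eq_mulVec_negOf [Fintype ι] {A : Matrix κ ι ℤ} {z : ι → ℤ}
    (hz : IsMove A z) : A *ᵥ natToInt (posOf z) = A *ᵥ natToInt (negOf z) := by
  rw [← sub_eq_zero, ← Matrix.mulVec_sub, natToInt_posOf_sub_natToInt_negOf]
  exact hz

lemma isMove_of_mem_union_neg [Fintype ι] {A : Matrix κ ι ℤ} {B : Set (ι → ℤ)}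
    (hB : ∀ b ∈ B, IsMove A b) {c : ι → ℤ} (hc : c ∈ B ∪ -B) : IsMove A c := by
  rcases hc with hc | hc
  · exact hB c hc
  · simpa using (hB _ hc).neg

lemma neg_mem_union_neg {B : Set (ι → ℤ)} {c : ι → ℤ} (hc : c ∈ B ∪ -B) :
    -c ∈ B ∪ -B := by
  rcases hc with hc | hc
  · exact Or.inr (by simpa using hc)
  · exact Or.inl hc

lemma smul_mem_union_neg {B : Set (ι → ℤ)} {b : ι → ℤ} (hb : b ∈ B) {ε : ℤ}
    (hε : ε = 1 ∨ ε = -1) : ε • b ∈ B ∪ -B := by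
  rcases hε with rfl | rfl
  · exact Or.inl (by simpa using hb)
  · exact Or.inr (by simpa using hb)

end Moves

namespace IsHomogeneousMatrix

variable {ι κ : Type*} [Fintype ι] [Fintype κ] {A : Matrix κ ι ℤ}

lemma sum_eq_zero (hA : IsHomogeneousMatrix A) {z : ι → ℤ} (hz : IsMove A z) :
    ∑ i, z i = 0 := by
  obtain ⟨w, hw⟩ := hA
  have hzero : ∑ j, w j * ((A *ᵥ z) j : ℚ) = 0 := by
    rw [show A *ᵥ z = 0 from hz]
    simp
  have hswap : ∑ j, w j * ((A *ᵥ z) j : ℚ) = ∑ i, (z i : ℚ) := by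
    simp only [Matrix.mulVec, dotProduct, Int.cast_sum, Int.cast_mul, Finset.mul_sum]
    rw [Finset.sum_comm]
    refine Finset.sum_congr rfl fun i _ => ?_
    conv_rhs => rw [← one_mul (z i : ℚ), ← hw i, Finset.sum_mul]
    exact Finset.sum_congr rfl fun j _ => by ring
  exact_mod_cast hswap.symm.trans hzero

lemma degOf_eq_sum_negOf (hA : IsHomogeneousMatrix A) {z : ι → ℤ} (hz : IsMove A z) :
    degOf z = ∑ i, negOf z i := by
  have h := hA.sum_eq_zero hz
  simp only [← posOf_sub_negOf_apply z, Finset.sum_sub_distrib, sub_eq_zero] at h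
  exact_mod_cast h

lemma sum_abs_eq_two_mul_degOf (hA : IsHomogeneousMatrix A) {z : ι → ℤ} (hz : IsMove A z) :
    ∑ i, |z i| = 2 * degOf z := by
  have h : ((degOf z : ℕ) : ℤ) = ∑ i, (negOf z i : ℤ) := by
    exact_mod_cast hA.degOf_eq_sum_negOf hz
  simp only [abs_eq_posOf_add_negOf, Finset.sum_add_distrib, ← h, degOf, Nat.cast_sum]
  ring

lemma eq_zero_of_degOf_eq_zero (hA : IsHomogeneousMatrix A) {z : ι → ℤ} (hz : IsMove A z)
    (h : degOf z = 0) : z = 0 := by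
  have hsum : ∑ i, |z i| = 0 := by rw [hA.sum_abs_eq_two_mul_degOf hz, h]; rfl
  funext i
  exact abs_eq_zero.mp ((Finset.sum_eq_zero_iff_of_nonneg fun i _ => abs_nonneg (z i)).mp
    hsum i (Finset.mem_univ i))

end IsHomogeneousMatrix

section Accessibility

variable {ι κ : Type*} {B : Set (ι → ℤ)} {u v : ι → ℕ}

lemma mstep_iff : MStep B u v ↔ ∃ c ∈ B ∪ -B, natToInt v = natToInt u + c := by
  constructor
  · rintro ⟨b, hb, h | h⟩
    · exact ⟨b, Or.inl hb, h⟩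
    · exact ⟨-b, Or.inr (by simpa using hb), by rw [h, sub_eq_add_neg]⟩
  · rintro ⟨c, hc | hc, h⟩
    · exact ⟨c, hc, Or.inl h⟩
    · exact ⟨-c, hc, Or.inr (by rw [h, sub_neg_eq_add])⟩

lemma MStep.symm (h : MStep B u v) : MStep B v u := by
  obtain ⟨c, hc, h⟩ := mstep_iff.mp h
  exact mstep_iff.mpr ⟨-c, neg_mem_union_neg hc, by rw [h, add_neg_cancel_right]⟩

lemma Accessible.symm (h : Accessible B u v) : Accessible B v u := by
  induction h with
  | refl => exact .refl
  | tail _ hstep ih => exact .head hstep.symm ih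

lemma MStep.mem_fiberOf [Fintype ι] {A : Matrix κ ι ℤ} (hB : ∀ b ∈ B, IsMove A b)
    {t : κ → ℤ} (h : MStep B u v) (hu : u ∈ fiberOf A t) : v ∈ fiberOf A t := by
  obtain ⟨c, hc, h⟩ := mstep_iff.mp h
  have hc : A *ᵥ c = 0 := isMove_of_mem_union_neg hB hc
  change A *ᵥ natToInt u = t at hu
  change A *ᵥ natToInt v = t
  rw [h, Matrix.mulVec_add, hu, hc, add_zero]

lemma exists_mstep_of_nonneg {c : ι → ℤ} (hc : c ∈ B ∪ -B)
    (h : ∀ i, 0 ≤ natToInt u i + c i) : ∃ w, MStep B u w ∧ natToInt w = natToInt u + c :=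
  ⟨posOf (natToInt u + c), mstep_iff.mpr ⟨c, hc, natToInt_posOf_of_nonneg h⟩,
    natToInt_posOf_of_nonneg h⟩

end Accessibility

namespace IsNormReducing

variable {ι κ : Type*} [Fintype ι] {A : Matrix κ ι ℤ} {B : Set (ι → ℤ)}

lemma accessible (hB : IsNormReducing A B) (hBmoves : ∀ b ∈ B, IsMove A b) {t : κ → ℤ}
    {x y : ι → ℕ} (hx : x ∈ fiberOf A t) (hy : y ∈ fiberOf A t) : Accessible B x y := by
  suffices ∀ n : ℕ, ∀ x y, x ∈ fiberOf A t → y ∈ fiberOf A t →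
      (∑ i, |natToInt x i - natToInt y i|).toNat = n → Accessible B x y from
    this _ x y hx hy rfl
  intro n
  induction n using Nat.strong_induction_on with
  | _ n ih =>
  intro x y hx hy hn
  by_cases hxy : x = y
  · exact hxy ▸ .refl
  obtain ⟨b, hb, ε, hε, ⟨hnn, hlt⟩ | ⟨hnn, hlt⟩⟩ := hB t x hx y hy hxy
  · obtain ⟨x', hstep, hx'⟩ := exists_mstep_of_nonneg (smul_mem_union_neg hb hε) hnn
    refine .head hstep (ih _ ?_ x' y (hstep.mem_fiberOf hBmoves hx) hy rfl)
    have h0 : 0 ≤ ∑ i, |natToInt x i + ε * b i - natToInt y i| :=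
      Finset.sum_nonneg fun i _ => abs_nonneg _
    simp only [hx', Pi.add_apply, Pi.smul_apply, smul_eq_mul]
    omega
  · obtain ⟨y', hstep, hy'⟩ := exists_mstep_of_nonneg (smul_mem_union_neg hb hε) hnn
    refine .tail (ih _ ?_ x y' hx (hstep.mem_fiberOf hBmoves hy) rfl) hstep.symm
    have h0 : 0 ≤ ∑ i, |natToInt x i - (natToInt y i + ε * b i)| :=
      Finset.sum_nonneg fun i _ => abs_nonneg _
    simp only [hy', Pi.add_apply, Pi.smul_apply, smul_eq_mul]
    omega

lemma isMarkovBasis (hB : IsNormReducing A B) (hBfin : B.Finite)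
    (hBmoves : ∀ b ∈ B, IsMove A b) : IsMarkovBasis A B :=
  ⟨hBfin, hBmoves, fun _ _ hx _ hy => hB.accessible hBmoves hx hy⟩

lemma exists_reducing_move (hB : IsNormReducing A B) {z : ι → ℤ} (hz : IsMove A z)
    (hz0 : z ≠ 0) :
    ∃ c ∈ B ∪ -B, ∃ w, (w = z ∨ w = -z) ∧
      (∀ i, 0 ≤ (posOf w i : ℤ) + c i) ∧ ∑ i, |w i + c i| < ∑ i, |w i| := by
  have hne : posOf z ≠ negOf z := fun h => hz0 <| by
    rw [← natToInt_posOf_sub_natToInt_negOf z, h, sub_self]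
  obtain ⟨b, hb, ε, hε, ⟨hnn, hlt⟩ | ⟨hnn, hlt⟩⟩ :=
    hB _ (posOf z) rfl (negOf z) hz.mulVec_posOf_eq_mulVec_negOf.symm hne
  · refine ⟨ε • b, smul_mem_union_neg hb hε, z, Or.inl rfl, hnn, ?_⟩
    simpa only [natToInt_apply, ← posOf_sub_negOf_apply z, Pi.smul_apply, smul_eq_mul,
      add_sub_right_comm] using hlt
  · refine ⟨ε • b, smul_mem_union_neg hb hε, -z, Or.inr rfl, hnn, ?_⟩
    have hterm : ∀ i, |-z i + ε * b i| =
        |natToInt (posOf z) i - (natToInt (negOf z) i + ε * b i)| := fun i => by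
      rw [abs_sub_comm, ← posOf_sub_negOf_apply z i, natToInt_apply, natToInt_apply]
      congr 1
      ring
    simp only [Pi.neg_apply, Pi.smul_apply, smul_eq_mul, abs_neg, hterm]
    simpa only [natToInt_apply, posOf_sub_negOf_apply] using hlt

end IsNormReducing

section Replacement

variable {ι κ : Type*} {B : Set (ι → ℤ)} {x : ι → ℕ} {m : ι → ℤ}

/-- Every move of `B` having `x` as a part is rerouted through `x + m`: `b` with `b⁺ = x`
becomes `b + m`, and `b` with `b⁻ = x` becomes `-b + m`. -/
def replaceMonomial (B : Set (ι → ℤ)) (x : ι → ℕ) (m : ι → ℤ) : Set (ι → ℤ) :=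
  insert m
    ({b ∈ B | posOf b ≠ x ∧ negOf b ≠ x} ∪ (· + m) '' {b ∈ B ∪ -B | posOf b = x})

-- The step `u → u + b` becomes `u → u + (b + m) → u + b`; the middle point is
-- `(u - b⁻) + (x + m) ≥ 0`.
lemma accessible_of_posOf_eq {S : Set (ι → ℤ)} {b : ι → ℤ} {u v : ι → ℕ}
    (hxm : ∀ i, 0 ≤ (x i : ℤ) + m i) (hb : posOf b = x) (hm : m ∈ S) (hbm : b + m ∈ S)
    (huv : natToInt v = natToInt u + b) : Accessible S u v := by
  obtain ⟨w, hstep, hw⟩ := exists_mstep_of_nonneg (B := S) (u := u) (Or.inl hbm) fun i => by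
    have hv := congrFun huv i
    have hbi := congrFun hb i
    have := hxm i
    simp only [natToInt_apply, Pi.add_apply, posOf] at hv hbi ⊢
    omega
  refine .head hstep (.single (mstep_iff.mpr ⟨-m, Or.inr (by simpa using hm), ?_⟩))
  rw [hw, huv]
  abel

lemma MStep.accessible_replaceMonomial (hxm : ∀ i, 0 ≤ (x i : ℤ) + m i) {u v : ι → ℕ}
    (h : MStep B u v) : Accessible (replaceMonomial B x m) u v := by
  obtain ⟨c, hc, huv⟩ := mstep_iff.mp h
  have hm : m ∈ replaceMonomial B x m := Set.mem_insert _ _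
  have hadd : ∀ b ∈ B ∪ -B, posOf b = x → b + m ∈ replaceMonomial B x m :=
    fun b hb hbx => Or.inr (Or.inr (Set.mem_image_of_mem _ ⟨hb, hbx⟩))
  by_cases hpos : posOf c = x
  · exact accessible_of_posOf_eq hxm hpos hm (hadd c hc hpos) huv
  by_cases hneg : negOf c = x
  · rw [← posOf_neg] at hneg
    refine (accessible_of_posOf_eq hxm hneg hm (hadd _ (neg_mem_union_neg hc) hneg) ?_).symm
    rw [huv, add_neg_cancel_right]
  refine .single (mstep_iff.mpr ⟨c, ?_, huv⟩)
  rcases hc with hc | hc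
  · exact Or.inl (Or.inr (Or.inl ⟨hc, hpos, hneg⟩))
  · exact Or.inr (Or.inr (Or.inl ⟨hc, by rwa [posOf_neg], by rwa [negOf_neg]⟩))

lemma IsMarkovBasis.replaceMonomial [Fintype ι] {A : Matrix κ ι ℤ} (hB : IsMarkovBasis A B)
    (hm : IsMove A m) (hxm : ∀ i, 0 ≤ (x i : ℤ) + m i) :
    IsMarkovBasis A (replaceMonomial B x m) := by
  obtain ⟨hBfin, hBmoves, hBacc⟩ := hB
  refine ⟨?_, ?_, fun t u hu v hv => ?_⟩
  · exact ((hBfin.sep _).union (((hBfin.union hBfin.neg).sep _).image _)).insert m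
  · rintro b' (rfl | ⟨hb, -⟩ | ⟨b, ⟨hb, -⟩, rfl⟩)
    · exact hm
    · exact hBmoves _ hb
    · exact (isMove_of_mem_union_neg hBmoves hb).add hm
  · exact Relation.reflTransGen_closed (p := MStep (_root_.replaceMonomial B x m))
      (fun _ _ h => MStep.accessible_replaceMonomial hxm h) _ _ (hBacc t u hu v hv)

end Replacement

namespace IsHomogeneousMatrix

variable {ι κ : Type*} [Fintype ι] [Fintype κ] {A : Matrix κ ι ℤ} {x : ι → ℕ}
  {b m : ι → ℤ}

-- As `b + m = (x + m) - b⁻`, a part of `b + m` equal to `x` forces either `m ≥ 0`, hence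
-- `m = 0`, or `b⁻ = x = b⁺`, hence `x = 0`.
lemma posOf_add_ne (hA : IsHomogeneousMatrix A) (hm : IsMove A m) (hm0 : m ≠ 0)
    (hxm : ∀ i, 0 ≤ (x i : ℤ) + m i) (hb : posOf b = x) : posOf (b + m) ≠ x := by
  intro hbm
  have hm_nonneg : ∀ i, 0 ≤ m i := fun i => by
    have h1 := congrFun hb i
    have h2 := congrFun hbm i
    have := hxm i
    simp only [posOf, Pi.add_apply] at h1 h2
    omega
  refine hm0 (funext fun i => ?_)
  exact (Finset.sum_eq_zero_iff_of_nonneg fun i _ => hm_nonneg i).mp (hA.sum_eq_zero hm) i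
    (Finset.mem_univ i)

lemma negOf_add_ne (hA : IsHomogeneousMatrix A) (hb : IsMove A b) (hx0 : x ≠ 0)
    (hxm : ∀ i, 0 ≤ (x i : ℤ) + m i) (hbx : posOf b = x) : negOf (b + m) ≠ x := by
  intro hbm
  have hle : ∀ i ∈ Finset.univ, negOf (b + m) i ≤ negOf b i := fun i _ => by
    have h1 := congrFun hbx i
    have := hxm i
    simp only [posOf, negOf, Pi.add_apply] at h1 ⊢
    omega
  have hsum : ∑ i, negOf (b + m) i = ∑ i, negOf b i := by
    rw [← hA.degOf_eq_sum_negOf hb, degOf, hbx, hbm]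
  have heq := (Finset.sum_eq_sum_iff_of_le hle).mp hsum
  refine hx0 (funext fun i => ?_)
  have h1 := congrFun hbx i
  have h2 := congrFun hbm i
  have h3 := heq i (Finset.mem_univ i)
  simp only [posOf, negOf, Pi.zero_apply] at h1 h2 h3 ⊢
  omega

end IsHomogeneousMatrix

namespace IsIndispensableMonomial

variable {ι κ : Type*} [Fintype ι] [Fintype κ] {A : Matrix κ ι ℤ} {B : Set (ι → ℤ)}

lemma eq_zero_of_degOf_lt (hA : IsHomogeneousMatrix A) {x : ι → ℕ}
    (hx : IsIndispensableMonomial A x) (hB : IsMarkovBasis A B) {m : ι → ℤ} (hm : IsMove A m)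
    (hxm : ∀ i, 0 ≤ (x i : ℤ) + m i) (hdeg : degOf m < ∑ i, x i) : m = 0 := by
  by_contra hm0
  have hx0 : x ≠ 0 := by
    rintro rfl
    simp at hdeg
  obtain ⟨b', hb', hpart⟩ := hx _ (hB.replaceMonomial hm hxm)
  rcases hb' with rfl | ⟨-, hpos, hneg⟩ | ⟨b, ⟨hb, hbx⟩, rfl⟩
  · rcases hpart with h | h
    · exact hdeg.ne (by rw [degOf, h])
    · exact hdeg.ne (by rw [hA.degOf_eq_sum_negOf hm, h])
  · exact hpart.elim hpos hneg
  · exact hpart.elim (hA.posOf_add_ne hm hm0 hxm hbx)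
      (hA.negOf_add_ne (isMove_of_mem_union_neg hB.2.1 hb) hx0 hxm hbx)

lemma eq_neg_of_sum_abs_add_lt (hA : IsHomogeneousMatrix A) {z : ι → ℤ}
    (hneg : IsIndispensableMonomial A (negOf z)) (hB : IsMarkovBasis A B) (hz : IsMove A z)
    {c : ι → ℤ} (hc : IsMove A c) (hnn : ∀ i, 0 ≤ (posOf z i : ℤ) + c i)
    (hlt : ∑ i, |z i + c i| < ∑ i, |z i|) : c = -z := by
  have hzc : IsMove A (z + c) := hz.add hc
  refine eq_neg_of_add_eq_zero_right (hneg.eq_zero_of_degOf_lt hA hB hzc (fun i => ?_) ?_)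
  · have := hnn i
    simp only [posOf, negOf, Pi.add_apply] at this ⊢
    omega
  · have h1 := hA.sum_abs_eq_two_mul_degOf hzc
    have h2 := hA.sum_abs_eq_two_mul_degOf hz
    rw [hA.degOf_eq_sum_negOf hz] at h2
    simp only [Pi.add_apply] at h1
    omega

end IsIndispensableMonomial

theorem normReducing_contains_move_with_indispensable_parts_general
    {p d : ℕ} (A : Matrix (Fin d) (Fin p) ℤ) (hA : IsHomogeneousMatrix A)
    (z : Fin p → ℤ) (hz : IsMove A z)
    (hpos : IsIndispensableMonomial A (posOf z))
    (hneg : IsIndispensableMonomial A (negOf z))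
    (B : Set (Fin p → ℤ)) (hBfin : B.Finite) (hBmoves : ∀ b ∈ B, IsMove A b)
    (hB : IsNormReducing A B) :
    z ∈ B ∨ -z ∈ B := by
  have hBM : IsMarkovBasis A B := hB.isMarkovBasis hBfin hBmoves
  by_cases hz0 : z = 0
  · subst hz0
    obtain ⟨b, hb, hpart⟩ := hpos B hBM
    rw [posOf_zero] at hpart
    have hdeg : degOf b = 0 := by
      rcases hpart with h | h
      · simp [degOf, h]
      · simp [hA.degOf_eq_sum_negOf (hBmoves b hb), h]
    exact Or.inl (hA.eq_zero_of_degOf_eq_zero (hBmoves b hb) hdeg ▸ hb)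
  obtain ⟨c, hc, w, hw, hnn, hlt⟩ := hB.exists_reducing_move hz hz0
  have hwz : IsMove A w ∧ IsIndispensableMonomial A (negOf w) := by
    rcases hw with rfl | rfl
    exacts [⟨hz, hneg⟩, ⟨hz.neg, by rwa [negOf_neg]⟩]
  have hcw : c = -w := hwz.2.eq_neg_of_sum_abs_add_lt hA hBM hwz.1
    (isMove_of_mem_union_neg hBmoves hc) hnn hlt
  subst hcw
  rcases hw with rfl | rfl <;> rcases hc with hc | hc <;> simp_all [Set.mem_neg]

/-- a move both of whose parts are indispensable monomials belongs, up
to sign, to every 1-norm reducing finite set of moves. -/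
theorem normReducing_contains_move_with_indispensable_parts
    {p d : ℕ} (hp : 0 < p) (hd : 0 < d)
    (A : Matrix (Fin d) (Fin p) ℤ) (hA : IsHomogeneousMatrix A)
    (z : Fin p → ℤ) (hz : IsMove A z)
    (hpos : IsIndispensableMonomial A (posOf z))
    (hneg : IsIndispensableMonomial A (negOf z))
    (B : Set (Fin p → ℤ)) (hBfin : B.Finite) (hBmoves : ∀ b ∈ B, IsMove A b)
    (hB : IsNormReducing A B) :
    z ∈ B ∨ -z ∈ B :=
  normReducing_contains_move_with_indispensable_parts_general A hA z hz hpos hneg B hBfin hBmoves hB
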